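/- (Rule 4) Let T be a finite tree on vertex set V, let S be a total [1,2]-set of T, and let u ∈ V \ S be a vertex with exactly two neighbors in S. Form the graph T₄ on V ⊕ Fin 3 by keeping all edges of T (on the left summand) and adding the path u–v–w–x, where v = inr 0, w = inr 1 and x = inr 2 are new vertices (i.e. add edges {inl u, inr 0}, {inr 0, inr 1} and {inr 1, inr 2}). Then T₄ is a tree and (inl '' S) ∪ {w, x} is a total [1,2]-set of T₄. -/

import Mathlib

/-- `S` is a total `[1,2]`-set of `G`: every vertex of `G` (whether in `S` or
not) has at least one and at most two neighbors in `S`. -/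
def IsTotalOneTwoSet {V : Type*} (G : SimpleGraph V) (S : Set V) : Prop :=
  ∀ v : V, 1 ≤ (G.neighborSet v ∩ S).ncard ∧ (G.neighborSet v ∩ S).ncard ≤ 2

/-- The graph obtained from `T` by attaching a new path `u – inr 0 – inr 1 – inr 2`
of three new vertices at `u`. -/
def addPath3 {V : Type*} (T : SimpleGraph V) (u : V) : SimpleGraph (V ⊕ Fin 3) :=
  T.map Sum.inl ⊔
    SimpleGraph.fromEdgeSet
      {s(Sum.inl u, Sum.inr 0), s(Sum.inr 0, Sum.inr 1), s(Sum.inr 1, Sum.inr 2)}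

/-!
`addPath3 T u` is the disjoint union of `T` and the path `P₃` on the new vertices, joined by the
single edge `u – inr 0`; joining two trees by one edge gives a tree. In the total set, an old
vertex keeps exactly its old `S`-neighbours, since its only possible new neighbour `inr 0` is not
in the new set; each new vertex has exactly one neighbour among `inr 1, inr 2`, and none in
`inl '' S` because `u ∉ S`.
-/

open Sum

namespace SimpleGraph

variable {V W : Type*} {G : SimpleGraph V} {H : SimpleGraph W}

lemma not_isCycle_sum_of_isAcyclic_left (hG : G.IsAcyclic) {v : V}
    (c : (G ⊕g H).Walk (inl v) (inl v)) : ¬c.IsCycle := by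
  classical
  intro hc
  have hs : ∀ x ∈ c.support, x ∈ Set.range inl := by
    rintro (a | b) hx
    · exact ⟨a, rfl⟩
    · exact absurd ⟨c.takeUntil _ hx⟩ (not_reachable_sum_inl_inr v b)
  let e : G ≃g (G ⊕g H).induce (Set.range inl) := Embedding.sumInl.isoInduceRange
  have hci : (c.induce (Set.range inl) hs).IsCycle :=
    .of_map (f := (Embedding.induce _).toHom) (by rwa [Walk.map_induce])
  exact hG _ (hci.map (f := e.symm.toHom) e.symm.injective)

lemma IsAcyclic.sum (hG : G.IsAcyclic) (hH : H.IsAcyclic) : (G ⊕g H).IsAcyclic := by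
  rintro (v | w) c hc
  · exact not_isCycle_sum_of_isAcyclic_left hG c hc
  · exact not_isCycle_sum_of_isAcyclic_left hH (c.map Iso.sumComm.toHom)
      (hc.map Iso.sumComm.injective)

lemma IsTree.sum_sup_edge (hG : G.IsTree) (hH : H.IsTree) (v : V) (w : W) :
    (G.sum H ⊔ edge (inl v) (inr w)).IsTree :=
  ⟨hG.connected.sum_sup_edge hH.connected,
    (hG.isAcyclic.sum hH.isAcyclic).sup_edge_of_not_reachable (not_reachable_sum_inl_inr v w)⟩

lemma pathGraph_three_isTree : (pathGraph 3).IsTree := by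
  have hE : (pathGraph 3).edgeSet = {s(0, 1), s(1, 2)} := by
    ext e
    induction e using Sym2.ind with
    | h x y => fin_cases x <;> fin_cases y <;> simp [pathGraph_adj]
  rw [isTree_iff_connected_and_card, Nat.card_coe_set_eq, hE, Set.ncard_pair (by decide)]
  exact ⟨pathGraph_connected 2, by simp⟩

lemma ncard_pathGraph_three_neighborSet_inter (i : Fin 3) :
    ((pathGraph 3).neighborSet i ∩ {1, 2}).ncard = 1 := by
  rw [Set.ncard_eq_one]
  fin_cases i <;> [use 1; use 2; use 1] <;> ext j <;> fin_cases j <;> simp [pathGraph_adj]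

end SimpleGraph

open SimpleGraph

section addPath3

variable {V : Type*} (T : SimpleGraph V) (u : V)

@[simp] lemma addPath3_adj_inl_inl {a b : V} :
    (addPath3 T u).Adj (inl a) (inl b) ↔ T.Adj a b := by
  simpa [addPath3, map_adj'] using fun h => h.ne

@[simp] lemma addPath3_adj_inl_inr {a : V} {i : Fin 3} :
    (addPath3 T u).Adj (inl a) (inr i) ↔ a = u ∧ i = 0 := by
  simp [addPath3, map_adj']

@[simp] lemma addPath3_adj_inr_inl {a : V} {i : Fin 3} :
    (addPath3 T u).Adj (inr i) (inl a) ↔ a = u ∧ i = 0 := by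
  rw [adj_comm, addPath3_adj_inl_inr]

@[simp] lemma addPath3_adj_inr_inr {i j : Fin 3} :
    (addPath3 T u).Adj (inr i) (inr j) ↔ (pathGraph 3).Adj i j := by
  fin_cases i <;> fin_cases j <;> simp [addPath3, map_adj', pathGraph_adj]

lemma addPath3_eq_sum_sup_edge : addPath3 T u = T.sum (pathGraph 3) ⊔ edge (inl u) (inr 0) := by
  ext (a | i) (b | j) <;> simp [edge_adj, and_comm]

lemma addPath3_neighborSet_inl_inter (S : Set V) (a : V) :
    (addPath3 T u).neighborSet (inl a) ∩ (inl '' S ∪ {inr 1, inr 2}) =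
      inl '' (T.neighborSet a ∩ S) := by
  ext (b | i)
  · simp
  · simpa using fun _ (h : i = 0) => by simp [h]

lemma addPath3_neighborSet_inr_inter {S : Set V} (huS : u ∉ S) (i : Fin 3) :
    (addPath3 T u).neighborSet (inr i) ∩ (inl '' S ∪ {inr 1, inr 2}) =
      inr '' ((pathGraph 3).neighborSet i ∩ {1, 2}) := by
  ext (b | j)
  · simpa using fun h _ => h ▸ huS
  · simp

end addPath3

lemma SimpleGraph.IsTree.addPath3 {V : Type*} {T : SimpleGraph V} (hT : T.IsTree) (u : V) :
    (addPath3 T u).IsTree :=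
  addPath3_eq_sum_sup_edge T u ▸ hT.sum_sup_edge pathGraph_three_isTree u 0

theorem rule4_addPath3_totalOneTwoSet_general {V : Type*}
    (T : SimpleGraph V) (hT : T.IsTree)
    (S : Set V) (hS : IsTotalOneTwoSet T S)
    (u : V) (huS : u ∉ S) :
    (addPath3 T u).IsTree ∧
    IsTotalOneTwoSet (addPath3 T u)
      (Sum.inl '' S ∪ {Sum.inr 1, Sum.inr 2}) := by
  refine ⟨hT.addPath3 u, ?_⟩
  rintro (a | i)
  · rw [addPath3_neighborSet_inl_inter, Set.ncard_image_of_injective _ inl_injective]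
    exact hS a
  · rw [addPath3_neighborSet_inr_inter T u huS, Set.ncard_image_of_injective _ inr_injective,
      ncard_pathGraph_three_neighborSet_inter]
    omega

theorem rule4_addPath3_totalOneTwoSet {V : Type*} [Fintype V]
    (T : SimpleGraph V) (hT : T.IsTree)
    (S : Set V) (hS : IsTotalOneTwoSet T S)
    (u : V) (huS : u ∉ S) (htwo : (T.neighborSet u ∩ S).ncard = 2) :
    (addPath3 T u).IsTree ∧
    IsTotalOneTwoSet (addPath3 T u)
      (Sum.inl '' S ∪ {Sum.inr 1, Sum.inr 2}) :=
  rule4_addPath3_totalOneTwoSet_general T hT S hS u huS
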